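/- arXiv:1606.05775 — 2 statements merged into one kernel-verified Lean document; each statement's English description precedes it below -/
import Mathlib

section
/- Fix n ≥ 1 and σ ∈ {+1,-1}^n. Define the Bruhat order on ℤ^n by: a ⪰ b iff N_{[1,n]}(a,i) = N_{[1,n]}(b,i) for all i ∈ ℤ and N_{[1,s]}(a,i) ≥ N_{[1,s]}(b,i) for all i ∈ ℤ and 1 ≤ s ≤ n-1, where N_{[1,s]}(a,i) := #{r ≤ s : a_r > i, σ_r = +} - #{r ≤ s : a_r > i, σ_r = -}. Say the i-signature at position t of b is 'f' if either (σ_t = + and b_t = i) or (σ_t = - and b_t = i+1). Let d_t ∈ ℤ^n denote the tuple with 1 in position t and 0 elsewhere. Suppose a ⪰ b, the i-signature of a at position r is 'f', and the i-signature of b at position n is 'f'. Then a + σ_r d_r ⪰ b + σ_n d_n, with equality (a + σ_r d_r = b + σ_n d_n) if and only if a = b and r = n. -/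
attribute [local instance] Classical.propDecidable

/-- `N_{[1,s]}(a, i)`. -/
noncomputable def Nstat {n : ℕ} (σ : Fin n → ℤ) (a : Fin n → ℤ) (s : Fin n) (i : ℤ) : ℤ :=
  ((Finset.univ.filter (fun r : Fin n => r ≤ s ∧ i < a r ∧ σ r = 1)).card : ℤ)
    - ((Finset.univ.filter (fun r : Fin n => r ≤ s ∧ i < a r ∧ σ r = -1)).card : ℤ)

/-- The Bruhat order `a ⪰ b` on `ℤ^n` (here with `n + 1` entries, indexed by `Fin (n+1)`). -/
noncomputable def Bruhat {n : ℕ} (σ : Fin (n + 1) → ℤ) (a b : Fin (n + 1) → ℤ) : Prop :=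
  (∀ i : ℤ, Nstat σ a (Fin.last n) i = Nstat σ b (Fin.last n) i) ∧
    (∀ s : Fin (n + 1), s ≠ Fin.last n → ∀ i : ℤ, Nstat σ b s i ≤ Nstat σ a s i)

/-- The `i`-signature of `b` at position `t` is `f`. -/
def FSig {n : ℕ} (σ b : Fin n → ℤ) (i : ℤ) (t : Fin n) : Prop :=
  (σ t = 1 ∧ b t = i) ∨ (σ t = -1 ∧ b t = i + 1)

lemma Nstat_eq_sum {n : ℕ} (σ a : Fin n → ℤ) (hσ : ∀ r, σ r = 1 ∨ σ r = -1)
    (s : Fin n) (i : ℤ) :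
    Nstat σ a s i = ∑ t : Fin n, if t ≤ s ∧ i < a t then σ t else 0 := by
  unfold Nstat
  rw [Finset.card_filter, Finset.card_filter]
  push_cast
  rw [← Finset.sum_sub_distrib]
  apply Finset.sum_congr rfl
  intro t _
  rcases hσ t with h | h <;> by_cases hA : t ≤ s ∧ i < a t <;>
    simp [h, hA]

lemma Nstat_shift {n : ℕ} (σ a : Fin n → ℤ) (hσ : ∀ r, σ r = 1 ∨ σ r = -1)
    (i : ℤ) (r : Fin n) (hra : FSig σ a i r)
    (a' : Fin n → ℤ) (ha' : a' = fun x => a x + (if x = r then σ r else 0))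
    (s : Fin n) (j : ℤ) :
    Nstat σ a' s j = Nstat σ a s j + (if r ≤ s ∧ j = i then 1 else 0) := by
  rw [Nstat_eq_sum σ a hσ, Nstat_eq_sum σ a' hσ]
  have hpt : ∀ t : Fin n, (if t ≤ s ∧ j < a' t then σ t else 0)
      = (if t ≤ s ∧ j < a t then σ t else 0)
        + (if t = r then (if r ≤ s ∧ j = i then (1:ℤ) else 0) else 0) := by
    intro t
    by_cases htr : t = r
    · subst htr
      have ha't : a' t = a t + σ t := by rw [ha']; simp
      rcases hra with ⟨h1, h2⟩ | ⟨h1, h2⟩ <;>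
        rw [ha't, h1, h2] <;> split_ifs <;> omega
    · have ha't : a' t = a t := by rw [ha']; simp [htr]
      rw [ha't, if_neg htr, add_zero]
  rw [Finset.sum_congr rfl (fun t _ => hpt t), Finset.sum_add_distrib,
    Finset.sum_ite_eq' Finset.univ r]
  simp

theorem stmt_13 (n : ℕ) (σ : Fin (n + 1) → ℤ) (hσ : ∀ r, σ r = 1 ∨ σ r = -1)
    (a b : Fin (n + 1) → ℤ) (i : ℤ) (r : Fin (n + 1))
    (hab : Bruhat σ a b) (hra : FSig σ a i r) (hnb : FSig σ b i (Fin.last n))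
    (a' b' : Fin (n + 1) → ℤ)
    (ha' : a' = fun x => a x + (if x = r then σ r else 0))
    (hb' : b' = fun x => b x + (if x = Fin.last n then σ (Fin.last n) else 0)) :
    Bruhat σ a' b' ∧ (a' = b' ↔ (a = b ∧ r = Fin.last n)) := by
  have key_a := Nstat_shift σ a hσ i r hra a' ha'
  have key_b := Nstat_shift σ b hσ i (Fin.last n) hnb b' hb'
  constructor
  · constructor
    · intro j
      rw [key_a, key_b, hab.1 j]
      simp [Fin.le_last]
    · intro s hs j
      rw [key_a, key_b]
      have h1 : ¬ (Fin.last n ≤ s) := fun h => hs (le_antisymm (Fin.le_last s) h)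
      rw [if_neg (by tauto)]
      have h2 : (0:ℤ) ≤ if r ≤ s ∧ j = i then 1 else 0 := by split_ifs <;> norm_num
      have h3 := hab.2 s hs j
      linarith
  · constructor
    · intro h
      have hrn : r = Fin.last n := by
        by_contra hr
        have heq : ∀ x, a' x = b' x := fun x => congrFun h x
        have hne : ∀ x : Fin (n+1), x ≤ r → x ≠ r → a x = b x := by
          intro x hxr hxne
          have hxl : x ≠ Fin.last n := by
            intro hx
            exact hr (le_antisymm (Fin.le_last r) (hx ▸ hxr))
          have := heq x
          rw [ha', hb'] at this
          simp [hxne, hxl] at this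
          exact this
        have hbr : b r = a r + σ r := by
          have := heq r
          rw [ha', hb'] at this
          simp [hr] at this
          omega
        have hsum : Nstat σ b r i = Nstat σ a r i + 1 := by
          rw [Nstat_eq_sum σ a hσ, Nstat_eq_sum σ b hσ]
          have hpt : ∀ t : Fin (n+1), (if t ≤ r ∧ i < b t then σ t else 0)
              = (if t ≤ r ∧ i < a t then σ t else 0)
                + (if t = r then (1:ℤ) else 0) := by
            intro t
            by_cases htr : t = r
            · subst htr
              rcases hra with ⟨h1, h2⟩ | ⟨h1, h2⟩ <;>
                rw [hbr, h1, h2] <;> split_ifs <;> omega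
            · rw [if_neg htr, add_zero]
              by_cases hts : t ≤ r
              · rw [hne t hts htr]
              · rw [if_neg (by tauto), if_neg (by tauto)]
          rw [Finset.sum_congr rfl (fun t _ => hpt t), Finset.sum_add_distrib,
            Finset.sum_ite_eq' Finset.univ r]
          simp
        have := hab.2 r hr i
        omega
      subst hrn
      refine ⟨funext fun x => ?_, rfl⟩
      have := congrFun h x
      rw [ha', hb'] at this
      simp at this
      omega
    · rintro ⟨h1, h2⟩
      subst h1; subst h2
      rw [ha', hb']
end

section
/- (Lusztig's Lemma, finite case.) Let (B, ≤) be a finite partially ordered set, and let M be the free ℤ[q, q⁻¹]-module with basis {v_b : b ∈ B}. Let ψ : M → M be an additive map satisfying ψ(q^k m) = q^{-k} ψ(m) for all k ∈ ℤ, m ∈ M, such that ψ² = id and for every b, ψ(v_b) - v_b lies in the ℤ[q,q⁻¹]-span of {v_a : a > b}. Then for each b ∈ B there exists a unique element c_b ∈ M such that ψ(c_b) = c_b and c_b - v_b lies in the q·ℤ[q]-span of {v_a : a > b}. -/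
/-!
Uniqueness: at a minimal point `a` of the support of `m`, triangularity makes `ψ m` and `m`
agree up to the bar involution, `(ψ m) a = bar (m a)`; so if `ψ m = m` then `m a` is
bar-invariant, which is impossible for a nonzero element of `q ℤ[q]`.

Existence: `c_b = v_b + y` where `ψ y - y = v_b - ψ v_b`. Equations `ψ y - y = x`, with `x`
anti-invariant and supported on an upper set `U`, are solved by induction on `U`. At a minimal
`a ∈ U` the coefficient `x a` is bar-anti-invariant, hence equal to `bar p - p` with `p ∈ q ℤ[q]`;
the smaller upper set `U \ {a}` provides `c_a`, and `x - (x a) • c_a` is supported on `U \ {a}`.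
-/

open LaurentPolynomial Polynomial

namespace LaurentPolynomial

variable {R : Type*} [CommRing R]

/-- `q R[q]`, as the image of the ideal `(X)` of `R[X]`. -/
def qPolynomial : NonUnitalSubring R[T;T⁻¹] where
  carrier := {r | ∃ f : R[X], r = toLaurent (X * f)}
  zero_mem' := ⟨0, by simp⟩
  add_mem' := by
    rintro _ _ ⟨f, rfl⟩ ⟨g, rfl⟩
    exact ⟨f + g, by rw [mul_add, map_add]⟩
  neg_mem' := by
    rintro _ ⟨f, rfl⟩
    exact ⟨-f, by rw [mul_neg, map_neg]⟩
  mul_mem' := by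
    rintro _ _ ⟨f, rfl⟩ ⟨g, rfl⟩
    exact ⟨f * X * g, by rw [← map_mul]; ring_nf⟩

theorem coeff_toLaurent_natCast (f : R[X]) (k : ℕ) : (toLaurent f).coeff k = f.coeff k :=
  Finsupp.mapDomain_apply Nat.castEmbedding.injective _ k

theorem coeff_toLaurent_of_neg (f : R[X]) {n : ℤ} (hn : n < 0) : (toLaurent f).coeff n = 0 :=
  Finsupp.mapDomain_of_notMem_range _ _ (by rintro ⟨k, rfl⟩; simp at hn; omega)

theorem coeff_trunc (r : R[T;T⁻¹]) (k : ℕ) : (trunc r).coeff k = r.coeff k := by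
  simp [trunc]

theorem coeff_eq_zero_of_mem_qPolynomial {r : R[T;T⁻¹]} (hr : r ∈ qPolynomial) {n : ℤ}
    (hn : n ≤ 0) : r.coeff n = 0 := by
  obtain ⟨f, rfl⟩ := hr
  rcases hn.lt_or_eq with hn | rfl
  · exact coeff_toLaurent_of_neg _ hn
  · rw [← Nat.cast_zero, coeff_toLaurent_natCast, coeff_X_mul_zero]

theorem eq_zero_of_mem_qPolynomial_of_invert_eq {r : R[T;T⁻¹]} (hr : r ∈ qPolynomial)
    (h : invert r = r) : r = 0 := by
  ext n
  rcases le_total n 0 with hn | hn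
  · exact coeff_eq_zero_of_mem_qPolynomial hr hn
  · rw [← h, invert_apply]
    exact coeff_eq_zero_of_mem_qPolynomial hr (by omega)

theorem exists_mem_qPolynomial_sub_invert_eq [IsAddTorsionFree R] {r : R[T;T⁻¹]}
    (h : invert r = -r) : ∃ p ∈ qPolynomial, p - invert p = r := by
  -- the terms of `r` of positive degree
  set p := toLaurent (X * divX (trunc r))
  have hp : p ∈ qPolynomial := ⟨_, rfl⟩
  have hpos : ∀ k : ℕ, p.coeff (k + 1 : ℕ) = r.coeff (k + 1 : ℕ) := fun k => by
    rw [coeff_toLaurent_natCast, coeff_X_mul, coeff_divX, coeff_trunc]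
  have hanti : ∀ n, r.coeff (-n) = -r.coeff n := fun n => by
    rw [← invert_apply, h]; rfl
  refine ⟨p, hp, LaurentPolynomial.ext fun n => ?_⟩
  rw [AddMonoidAlgebra.coeff_sub, Finsupp.sub_apply, invert_apply]
  rcases lt_trichotomy n 0 with hn | rfl | hn
  · obtain ⟨k, hk⟩ : ∃ k : ℕ, -n = (k + 1 : ℕ) := ⟨(-n).toNat - 1, by omega⟩
    rw [coeff_eq_zero_of_mem_qPolynomial hp hn.le, hk, hpos, ← hk, hanti, zero_sub, neg_neg]
  · have htwo : (2 : ℕ) • r.coeff 0 = 2 • 0 := by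
      rw [two_nsmul, smul_zero, ← sub_neg_eq_add, ← hanti 0, neg_zero, sub_self]
    rw [neg_zero, sub_self, nsmul_right_injective two_ne_zero htwo]
  · obtain ⟨k, rfl⟩ : ∃ k : ℕ, n = (k + 1 : ℕ) := ⟨n.toNat - 1, by omega⟩
    rw [hpos, coeff_eq_zero_of_mem_qPolynomial hp (by omega), sub_zero]

end LaurentPolynomial

open Set
open Finsupp (single supported mem_supported mem_supported' supported_mono single_mem_supported)

theorem map_smul_eq_invert_smul_of_map_T_smul {B : Type*}
    (ψ : (B →₀ ℤ[T;T⁻¹]) →+ (B →₀ ℤ[T;T⁻¹]))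
    (hT : ∀ (k : ℤ) m, ψ ((T k : ℤ[T;T⁻¹]) • m) = (T (-k) : ℤ[T;T⁻¹]) • ψ m)
    (f : ℤ[T;T⁻¹]) (m : B →₀ ℤ[T;T⁻¹]) : ψ (f • m) = invert f • ψ m := by
  induction f using LaurentPolynomial.induction_on' with
  | add f g hf hg => rw [add_smul, map_add, hf, hg, map_add, add_smul]
  | C_mul_T n a =>
    rw [← LaurentPolynomial.smul_eq_C_mul, smul_assoc, map_zsmul, hT, map_zsmul, invert_T,
      smul_assoc]

section BarInvolution

variable {R B : Type*} [CommRing R] [PartialOrder B] {ψ : (B →₀ R[T;T⁻¹]) →+ (B →₀ R[T;T⁻¹])}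

theorem apply_eq_invert_of_forall_not_lt (hψ : ∀ (f : R[T;T⁻¹]) m, ψ (f • m) = invert f • ψ m)
    (htri : ∀ b, ψ (single b 1) - single b 1 ∈ supported R[T;T⁻¹] R[T;T⁻¹] (Ioi b))
    {m : B →₀ R[T;T⁻¹]} {a : B} (ha : ∀ b ∈ m.support, ¬ b < a) : ψ m a = invert (m a) := by
  classical
  have hdiag : ∀ b ∈ m.support, ψ (single b 1) a = single b 1 a := fun b hb =>
    sub_eq_zero.1 ((mem_supported' _ _).1 (htri b) a (ha b hb))
  have hm : m = ∑ b ∈ m.support, m b • single b 1 := by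
    simp_rw [Finsupp.smul_single_one]; exact m.sum_single.symm
  calc ψ m a = ∑ b ∈ m.support, invert (m b) * ψ (single b 1) a := by
        conv_lhs => rw [hm]
        simp only [map_sum, Finset.sum_apply', hψ, Finsupp.smul_apply, smul_eq_mul]
    _ = ∑ b ∈ m.support, invert (m b) * single b 1 a :=
        Finset.sum_congr rfl fun b hb => by rw [hdiag b hb]
    _ = invert (m a) := by
        simp +contextual [Finsupp.single_apply]

theorem eq_zero_of_map_eq_self (hψ : ∀ (f : R[T;T⁻¹]) m, ψ (f • m) = invert f • ψ m)
    (htri : ∀ b, ψ (single b 1) - single b 1 ∈ supported R[T;T⁻¹] R[T;T⁻¹] (Ioi b))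
    {m : B →₀ R[T;T⁻¹]} (hfix : ψ m = m) (hq : ∀ a, m a ∈ qPolynomial) : m = 0 := by
  by_contra hm
  obtain ⟨a, ha, hmin⟩ := m.support.exists_minimal (Finsupp.support_nonempty_iff.2 hm)
  have hbar : invert (m a) = m a := by
    rw [← apply_eq_invert_of_forall_not_lt hψ htri fun b hb hba => hba.not_ge (hmin hb hba.le),
      hfix]
  exact Finsupp.mem_support_iff.1 ha (eq_zero_of_mem_qPolynomial_of_invert_eq (hq a) hbar)

variable (ψ) in
def BarSolvableOn (U : Set B) : Prop :=
  ∀ x ∈ supported R[T;T⁻¹] R[T;T⁻¹] U, ψ x = -x →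
    ∃ y ∈ supported R[T;T⁻¹] R[T;T⁻¹] U, (∀ a, y a ∈ qPolynomial) ∧ ψ y - y = x

theorem exists_map_eq_self_of_barSolvableOn (hinv : ∀ m, ψ (ψ m) = m)
    (htri : ∀ b, ψ (single b 1) - single b 1 ∈ supported R[T;T⁻¹] R[T;T⁻¹] (Ioi b))
    {b : B} {U : Set B} (hU : Ioi b ⊆ U) (hS : BarSolvableOn ψ U) :
    ∃ c : B →₀ R[T;T⁻¹], ψ c = c ∧ c - single b 1 ∈ supported R[T;T⁻¹] R[T;T⁻¹] U ∧
      ∀ a, (c - single b 1 : B →₀ R[T;T⁻¹]) a ∈ qPolynomial := by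
  have hx : single b 1 - ψ (single b 1) ∈ supported R[T;T⁻¹] R[T;T⁻¹] U := by
    simpa using supported_mono hU (neg_mem (htri b))
  obtain ⟨y, hyU, hyq, hy⟩ := hS _ hx (by simp [hinv])
  refine ⟨single b 1 + y, ?_, by simpa using hyU, by simpa using hyq⟩
  rw [map_add, ← sub_add_cancel (ψ y) y, hy, ← add_assoc, add_sub_cancel]

theorem barSolvableOn_of_minimal [IsAddTorsionFree R]
    (hψ : ∀ (f : R[T;T⁻¹]) m, ψ (f • m) = invert f • ψ m) (hinv : ∀ m, ψ (ψ m) = m)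
    (htri : ∀ b, ψ (single b 1) - single b 1 ∈ supported R[T;T⁻¹] R[T;T⁻¹] (Ioi b))
    {U : Set B} {a : B} (hU : IsUpperSet U) (ha : Minimal (· ∈ U) a)
    (hS : BarSolvableOn ψ (U \ {a})) : BarSolvableOn ψ U := by
  obtain ⟨c, hcfix, hcU, hcq⟩ := exists_map_eq_self_of_barSolvableOn (b := a) (U := U \ {a})
    hinv htri (fun b hb => ⟨hU hb.le ha.prop, hb.ne'⟩) hS
  have hca : c a = 1 := by
    simpa [sub_eq_zero] using (mem_supported' _ _).1 hcU a (by simp)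
  have hc : c ∈ supported R[T;T⁻¹] R[T;T⁻¹] U := by
    simpa using
      add_mem (single_mem_supported R[T;T⁻¹] 1 ha.prop) (supported_mono sdiff_subset hcU)
  intro x hx hψx
  have hxa : invert (x a) = -x a := by
    rw [← apply_eq_invert_of_forall_not_lt hψ htri fun b hb =>
      ha.not_lt ((mem_supported _ _).1 hx hb), hψx, Finsupp.neg_apply]
  obtain ⟨p, hp, hpx⟩ := exists_mem_qPolynomial_sub_invert_eq (r := -x a) (by rw [map_neg, hxa])
  have hx' : x - x a • c ∈ supported R[T;T⁻¹] R[T;T⁻¹] (U \ {a}) := by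
    refine (mem_supported' _ _).2 fun b hb => ?_
    by_cases hbU : b ∈ U
    · obtain rfl : b = a := by simpa [hbU] using hb
      simp [hca]
    · simp [(mem_supported' _ _).1 hx b hbU, (mem_supported' _ _).1 hc b hbU]
  obtain ⟨y, hyU, hyq, hy⟩ := hS _ hx' (by
    rw [map_sub, hψ, hcfix, hψx, hxa]
    module)
  refine ⟨p • c + y, add_mem (Submodule.smul_mem _ _ hc) (supported_mono sdiff_subset hyU),
    fun b => ?_, ?_⟩
  · rw [Finsupp.add_apply, Finsupp.smul_apply, smul_eq_mul,
      ← sub_add_cancel (c b) (single a 1 b), mul_add]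
    refine add_mem (add_mem (mul_mem hp (hcq b)) ?_) (hyq b)
    classical
    rw [Finsupp.single_apply]
    split_ifs <;> simp [hp]
  · rw [map_add, hψ, hcfix, ← sub_add_cancel (ψ y) y, hy]
    linear_combination (norm := module) (-hpx) • c

theorem barSolvableOn_of_isUpperSet [Finite B] [IsAddTorsionFree R]
    (hψ : ∀ (f : R[T;T⁻¹]) m, ψ (f • m) = invert f • ψ m) (hinv : ∀ m, ψ (ψ m) = m)
    (htri : ∀ b, ψ (single b 1) - single b 1 ∈ supported R[T;T⁻¹] R[T;T⁻¹] (Ioi b))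
    {U : Set B} (hU : IsUpperSet U) : BarSolvableOn ψ U := by
  induction U using WellFoundedLT.induction with | ind U ih => ?_
  rcases U.eq_empty_or_nonempty with rfl | hne
  · intro x hx _
    rw [Finsupp.supported_empty, Submodule.mem_bot] at hx
    exact ⟨0, zero_mem _, fun _ => zero_mem _, by simp [hx]⟩
  · obtain ⟨a, ha⟩ := exists_minimal_of_wellFoundedLT (· ∈ U) hne
    exact barSolvableOn_of_minimal hψ hinv htri hU ha <| ih _ (sdiff_singleton_ssubset.2 ha.prop)
      (hU.erase fun b hb hba => ha.eq_of_le hb hba)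

end BarInvolution

theorem stmt_16 (B : Type*) [Fintype B] [PartialOrder B]
    (ψ : (B →₀ LaurentPolynomial ℤ) →+ (B →₀ LaurentPolynomial ℤ))
    (hbar : ∀ (k : ℤ) (m : B →₀ LaurentPolynomial ℤ),
      ψ ((T k : LaurentPolynomial ℤ) • m) = (T (-k) : LaurentPolynomial ℤ) • ψ m)
    (hinv : ∀ m, ψ (ψ m) = m)
    (htri : ∀ b a : B,
      ((ψ (Finsupp.single b 1) - Finsupp.single b 1 : B →₀ LaurentPolynomial ℤ)) a ≠ 0 → b < a) :
    ∀ b : B, ∃! c : B →₀ LaurentPolynomial ℤ,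
      ψ c = c ∧
      (∀ a : B, ((c - Finsupp.single b 1 : B →₀ LaurentPolynomial ℤ)) a ≠ 0 → b < a) ∧
      (∀ a : B, ∃ f : Polynomial ℤ,
        ((c - Finsupp.single b 1 : B →₀ LaurentPolynomial ℤ)) a
          = Polynomial.toLaurent (Polynomial.X * f)) := by
  intro b
  have hψ := map_smul_eq_invert_smul_of_map_T_smul ψ hbar
  have htri' : ∀ b, ψ (single b 1) - single b 1 ∈ supported ℤ[T;T⁻¹] ℤ[T;T⁻¹] (Ioi b) :=
    fun b => (mem_supported' _ _).2 fun a ha => not_not.1 (mt (htri b a) ha)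
  obtain ⟨c, hfix, hsupp, hq⟩ := exists_map_eq_self_of_barSolvableOn hinv htri' subset_rfl
    (barSolvableOn_of_isUpperSet hψ hinv htri' (isUpperSet_Ioi b))
  refine ⟨c, ⟨hfix, fun a ha => by_contra fun h => ha ((mem_supported' _ _).1 hsupp a h), hq⟩, ?_⟩
  rintro c' ⟨hfix', -, hq'⟩
  refine sub_eq_zero.1 (eq_zero_of_map_eq_self hψ htri' (by rw [map_sub, hfix, hfix']) fun a => ?_)
  rw [← sub_sub_sub_cancel_right c' c (single b 1)]
  exact sub_mem (hq' a) (hq a)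
end
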